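/- Let (A,{·,·},μ,α,β) be a BiHom-Poisson algebra, let D₁ be an (α^k,β^l)-central derivation of A and D₂ an (α^{k'},β^{l'})-derivation of A. Then [D₁,D₂] = D₁∘D₂ − D₂∘D₁ is an (α^{k+k'},β^{l+l'})-central derivation of A; moreover α∘D₁ is an (α^{k+1},β^l)-central derivation and β∘D₁ is an (α^k,β^{l+1})-central derivation of A. -/
import Mathlib


/-- A BiHom-Poisson algebra structure on a `K`-vector space `A` (K a field of
characteristic 0), given by bilinear maps `br` (the bracket `{·,·}`) and
`mul` (the product `μ`) and commuting linear maps `α`, `β` that are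
multiplicative with respect to both operations. -/
structure IsBiHomPoisson {K A : Type*} [Field K] [CharZero K]
    [AddCommGroup A] [Module K A]
    (br mul : A →ₗ[K] A →ₗ[K] A) (α β : A →ₗ[K] A) : Prop where
  comm_maps : ∀ x, α (β x) = β (α x)
  map_mul_alpha : ∀ x y, α (mul x y) = mul (α x) (α y)
  map_mul_beta : ∀ x y, β (mul x y) = mul (β x) (β y)
  map_br_alpha : ∀ x y, α (br x y) = br (α x) (α y)
  map_br_beta : ∀ x y, β (br x y) = br (β x) (β y)
  assoc : ∀ x y z, mul (mul x y) (β z) = mul (α x) (mul y z)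
  mul_comm : ∀ x y, mul (β x) (α y) = mul (β y) (α x)
  skew : ∀ x y, br (β x) (α y) = - br (β y) (α x)
  jacobi : ∀ x y z,
    br (β (β x)) (br (β y) (α z)) + br (β (β y)) (br (β z) (α x))
      + br (β (β z)) (br (β x) (α y)) = 0
  leibniz : ∀ x y z,
    br (α (β x)) (mul y z) = mul (br (β x) y) (β z) + mul (β y) (br (α x) z)

/-- An `(α^k, β^l)`-derivation of a BiHom-Poisson algebra. -/
def IsBHDerivation {K A : Type*} [Field K] [CharZero K]
    [AddCommGroup A] [Module K A]
    (br mul : A →ₗ[K] A →ₗ[K] A) (α β : A →ₗ[K] A) (k l : ℕ)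
    (D : A →ₗ[K] A) : Prop :=
  (∀ x, D (α x) = α (D x)) ∧ (∀ x, D (β x) = β (D x)) ∧
  (∀ x y, D (br x y)
    = br ((α ^ k) ((β ^ l) x)) (D y) + br (D x) ((α ^ k) ((β ^ l) y))) ∧
  (∀ x y, D (mul x y)
    = mul ((α ^ k) ((β ^ l) x)) (D y) + mul (D x) ((α ^ k) ((β ^ l) y)))

/-- An `(α^k, β^l)`-central derivation of a BiHom-Poisson algebra. -/
def IsBHCentralDerivation {K A : Type*} [Field K] [CharZero K]
    [AddCommGroup A] [Module K A]
    (br mul : A →ₗ[K] A →ₗ[K] A) (α β : A →ₗ[K] A) (k l : ℕ)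
    (D : A →ₗ[K] A) : Prop :=
  (∀ x, D (α x) = α (D x)) ∧ (∀ x, D (β x) = β (D x)) ∧
  (∀ x y, br (D x) ((α ^ k) ((β ^ l) y)) = 0) ∧ (∀ x y, D (br x y) = 0) ∧
  (∀ x y, mul (D x) ((α ^ k) ((β ^ l) y)) = 0) ∧ (∀ x y, D (mul x y) = 0)

/-- If a linear map `f` commutes pointwise with `g`, it commutes with all
powers of `g`. -/
lemma bh_pow_comm {K A : Type*} [Field K] [AddCommGroup A] [Module K A]
    {f g : A →ₗ[K] A} (hfg : ∀ x, f (g x) = g (f x)) :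
    ∀ n x, f ((g ^ n) x) = (g ^ n) (f x) := by
  intro n
  induction n with
  | zero => intro x; simp
  | succ n ih =>
      intro x
      rw [pow_succ, Module.End.mul_apply, Module.End.mul_apply, ih, hfg]

/-- Central derivations form a BiHom-ideal of the derivation algebra: the
commutator of a central derivation with a derivation is a central derivation,
and `α∘D₁`, `β∘D₁` are again central derivations. -/
theorem bhCentralDerivation_ideal {K A : Type*} [Field K] [CharZero K]
    [AddCommGroup A] [Module K A]
    (br mul : A →ₗ[K] A →ₗ[K] A) (α β : A →ₗ[K] A)
    (h : IsBiHomPoisson br mul α β)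
    (k l k' l' : ℕ) (D₁ D₂ : A →ₗ[K] A)
    (hD₁ : IsBHCentralDerivation br mul α β k l D₁)
    (hD₂ : IsBHDerivation br mul α β k' l' D₂) :
    IsBHCentralDerivation br mul α β (k + k') (l + l') (D₁ ∘ₗ D₂ - D₂ ∘ₗ D₁) ∧
    IsBHCentralDerivation br mul α β (k + 1) l (α ∘ₗ D₁) ∧
    IsBHCentralDerivation br mul α β k (l + 1) (β ∘ₗ D₁) := by
  obtain ⟨c1a, c1b, c1br, c1brz, c1mul, c1mulz⟩ := hD₁
  obtain ⟨c2a, c2b, d2br, d2mul⟩ := hD₂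
  -- commutation with powers
  have d1pa : ∀ n x, D₁ ((α ^ n) x) = (α ^ n) (D₁ x) := bh_pow_comm c1a
  have d1pb : ∀ n x, D₁ ((β ^ n) x) = (β ^ n) (D₁ x) := bh_pow_comm c1b
  have d2pa : ∀ n x, D₂ ((α ^ n) x) = (α ^ n) (D₂ x) := bh_pow_comm c2a
  have d2pb : ∀ n x, D₂ ((β ^ n) x) = (β ^ n) (D₂ x) := bh_pow_comm c2b
  have abp : ∀ n x, α ((β ^ n) x) = (β ^ n) (α x) := bh_pow_comm h.comm_maps
  have bap : ∀ n x, β ((α ^ n) x) = (α ^ n) (β x) :=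
    bh_pow_comm (fun x => (h.comm_maps x).symm)
  have papb : ∀ m n x, (α ^ m) ((β ^ n) x) = (β ^ n) ((α ^ m) x) :=
    fun m => bh_pow_comm (fun x => (bap m x).symm)
  have key : ∀ y, (α ^ (k + k')) ((β ^ (l + l')) y)
      = (α ^ k') ((β ^ l') ((α ^ k) ((β ^ l) y))) := by
    intro y
    rw [add_comm k k', add_comm l l', pow_add, pow_add, Module.End.mul_apply,
      Module.End.mul_apply, papb]
  have key2 : ∀ y, (α ^ (k + k')) ((β ^ (l + l')) y)
      = (α ^ k) ((β ^ l) ((α ^ k') ((β ^ l') y))) := by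
    intro y
    rw [pow_add, pow_add, Module.End.mul_apply, Module.End.mul_apply, papb]
  -- centrality of D₂ ∘ D₁ terms
  have hDDbr : ∀ x y, br (D₂ (D₁ x)) ((α ^ (k + k')) ((β ^ (l + l')) y)) = 0 := by
    intro x y
    have h0 : D₂ (br (D₁ x) ((α ^ k) ((β ^ l) y))) = 0 := by
      rw [c1br x y, map_zero]
    rw [d2br] at h0
    have h1 : br ((α ^ k') ((β ^ l') (D₁ x))) (D₂ ((α ^ k) ((β ^ l) y))) = 0 := by
      rw [← d1pb, ← d1pa, d2pa, d2pb, c1br]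
    rw [h1, zero_add, ← key] at h0
    exact h0
  have hDDmul : ∀ x y, mul (D₂ (D₁ x)) ((α ^ (k + k')) ((β ^ (l + l')) y)) = 0 := by
    intro x y
    have h0 : D₂ (mul (D₁ x) ((α ^ k) ((β ^ l) y))) = 0 := by
      rw [c1mul x y, map_zero]
    rw [d2mul] at h0
    have h1 : mul ((α ^ k') ((β ^ l') (D₁ x))) (D₂ ((α ^ k) ((β ^ l) y))) = 0 := by
      rw [← d1pb, ← d1pa, d2pa, d2pb, c1mul]
    rw [h1, zero_add, ← key] at h0
    exact h0
  refine ⟨⟨?_, ?_, ?_, ?_, ?_, ?_⟩, ⟨?_, ?_, ?_, ?_, ?_, ?_⟩,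
    ⟨?_, ?_, ?_, ?_, ?_, ?_⟩⟩
  · intro x
    simp only [LinearMap.sub_apply, LinearMap.comp_apply, c1a, c2a, map_sub]
  · intro x
    simp only [LinearMap.sub_apply, LinearMap.comp_apply, c1b, c2b, map_sub]
  · intro x y
    simp only [LinearMap.sub_apply, LinearMap.comp_apply, map_sub,
      LinearMap.sub_apply]
    rw [hDDbr, key2, c1br, sub_zero]
  · intro x y
    simp only [LinearMap.sub_apply, LinearMap.comp_apply]
    rw [c1brz, map_zero, sub_zero, d2br, map_add, c1brz, c1brz, add_zero]
  · intro x y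
    simp only [LinearMap.sub_apply, LinearMap.comp_apply, map_sub,
      LinearMap.sub_apply]
    rw [hDDmul, key2, c1mul, sub_zero]
  · intro x y
    simp only [LinearMap.sub_apply, LinearMap.comp_apply]
    rw [c1mulz, map_zero, sub_zero, d2mul, map_add, c1mulz, c1mulz, add_zero]
  -- α ∘ D₁
  · intro x
    simp only [LinearMap.comp_apply, c1a]
  · intro x
    simp only [LinearMap.comp_apply, c1b, h.comm_maps]
  · intro x y
    simp only [LinearMap.comp_apply]
    rw [pow_succ', Module.End.mul_apply, ← h.map_br_alpha, c1br, map_zero]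
  · intro x y
    simp only [LinearMap.comp_apply, c1brz, map_zero]
  · intro x y
    simp only [LinearMap.comp_apply]
    rw [pow_succ', Module.End.mul_apply, ← h.map_mul_alpha, c1mul, map_zero]
  · intro x y
    simp only [LinearMap.comp_apply, c1mulz, map_zero]
  -- β ∘ D₁
  · intro x
    simp only [LinearMap.comp_apply, c1a, ← h.comm_maps]
  · intro x
    simp only [LinearMap.comp_apply, c1b]
  · intro x y
    simp only [LinearMap.comp_apply]
    rw [pow_succ', Module.End.mul_apply, ← bap, ← h.map_br_beta, c1br, map_zero]
  · intro x y
    simp only [LinearMap.comp_apply, c1brz, map_zero]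
  · intro x y
    simp only [LinearMap.comp_apply]
    rw [pow_succ', Module.End.mul_apply, ← bap, ← h.map_mul_beta, c1mul, map_zero]
  · intro x y
    simp only [LinearMap.comp_apply, c1mulz, map_zero]
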